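/- Let H(x)=x^α+h(x) with α>0 and suppose h'(x)/x^{α-ε-1}→0 for some 0<ε<α. Then f(a)=∫_a^∞ e^{-H(x)}dx/e^{-H(a)} satisfies f(a) = (a^{1-α}/α)·(1 + o(a^{-ε})) as a→∞. -/

import Mathlib

open Real Filter MeasureTheory Asymptotics

private lemma aux_tendsto (α s : ℝ) (hα : 0 < α) :
    Tendsto (fun x : ℝ => x ^ s * Real.exp (-(x ^ α / 2))) atTop (nhds 0) := by
  have h1 := tendsto_rpow_mul_exp_neg_mul_atTop_nhds_zero (s / α) (1/2) (by norm_num)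
  have h2 := h1.comp (tendsto_rpow_atTop hα)
  refine h2.congr' ?_
  filter_upwards [eventually_gt_atTop (0:ℝ)] with x hx
  simp only [Function.comp_apply]
  rw [← Real.rpow_mul hx.le, show α * (s / α) = s by field_simp]
  ring_nf

private lemma aux_integrable (α : ℝ) (hα : 0 < α) (a : ℝ) (ha : 0 < a) :
    IntegrableOn (fun x : ℝ => Real.exp (-(x ^ α / 2))) (Set.Ioi a) := by
  have h0 := aux_tendsto α 2 hα
  have hev : ∀ᶠ x : ℝ in atTop, x ^ (2:ℝ) * Real.exp (-(x ^ α / 2)) ≤ 1 :=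
    h0.eventually (eventually_le_nhds one_pos)
  obtain ⟨T, hT⟩ := eventually_atTop.mp (hev.and (eventually_ge_atTop (max a 1)))
  have hTa : a ≤ T := le_trans (le_max_left _ _) (hT T le_rfl).2
  have hT1 : (1:ℝ) ≤ T := le_trans (le_max_right _ _) (hT T le_rfl).2
  have hT0 : (0:ℝ) < T := lt_of_lt_of_le one_pos hT1
  rw [← Set.Ioc_union_Ioi_eq_Ioi hTa, integrableOn_union]
  constructor
  · have hc : ContinuousOn (fun x : ℝ => Real.exp (-(x ^ α / 2))) (Set.Icc a T) := by
      apply Real.continuous_exp.comp_continuousOn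
      apply ContinuousOn.neg
      apply ContinuousOn.div_const
      exact ContinuousOn.rpow_const continuousOn_id
        (fun x hx => Or.inl (ne_of_gt (lt_of_lt_of_le ha hx.1)))
    exact (hc.integrableOn_Icc).mono_set Set.Ioc_subset_Icc_self
  · apply Integrable.mono'
      (integrableOn_Ioi_rpow_of_lt (by norm_num : (-2:ℝ) < -1) hT0)
    · apply ContinuousOn.aestronglyMeasurable _ measurableSet_Ioi
      apply Real.continuous_exp.comp_continuousOn
      apply ContinuousOn.neg
      apply ContinuousOn.div_const
      exact ContinuousOn.rpow_const continuousOn_id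
        (fun x hx => Or.inl (ne_of_gt (lt_trans hT0 hx)))
    · filter_upwards [ae_restrict_mem measurableSet_Ioi] with x hx
      have hx0 : (0:ℝ) < x := lt_trans hT0 hx
      have hb := (hT x (le_of_lt hx)).1
      rw [Real.norm_eq_abs, abs_of_pos (Real.exp_pos _)]
      calc Real.exp (-(x ^ α / 2))
          = x ^ (-2:ℝ) * (x ^ (2:ℝ) * Real.exp (-(x ^ α / 2))) := by
            rw [← mul_assoc, ← Real.rpow_add hx0]; norm_num
        _ ≤ x ^ (-2:ℝ) * 1 :=
            mul_le_mul_of_nonneg_left hb (Real.rpow_nonneg hx0.le _)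
        _ = x ^ (-2:ℝ) := mul_one _

/-- For `H x = x^α + h x` with `h' x / x^(α-ε-1) → 0` for some
`0 < ε < α`, the expected overshoot `f a = ∫_a^∞ e^{-H x} dx / e^{-H a}` satisfies
`f a = (a^(1-α)/α) (1 + o(a^{-ε}))`, i.e. `f a / (a^(1-α)/α) - 1 = o(a^{-ε})`. -/
theorem stmt3 (α ε : ℝ) (hα : 0 < α) (hε : 0 < ε) (hεα : ε < α) (h h' : ℝ → ℝ)
    (hd : ∀ x, HasDerivAt h (h' x) x)
    (h2 : Tendsto (fun x => h' x / x ^ (α - ε - 1)) atTop (nhds 0)) :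
    (fun a =>
        ((∫ x in Set.Ioi a, Real.exp (-(x ^ α + h x))) / Real.exp (-(a ^ α + h a)))
          / (a ^ (1 - α) / α) - 1)
      =o[atTop] (fun a => a ^ (-ε)) := by
  rw [isLittleO_iff]
  intro c hc
  set δ : ℝ := min (c / 2) 1 with hδdef
  have hδpos : 0 < δ := lt_min (by linarith) one_pos
  have hδc : 2 * δ ≤ c := by
    have h1 : δ ≤ c / 2 := min_le_left _ _
    linarith
  have hδ1 : δ ≤ 1 := min_le_right _ _
  -- eventual bounds in x
  have ev1 : ∀ᶠ x : ℝ in atTop,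
      |h' x / x ^ (α - ε - 1)| ≤ min (α * δ / 2) (α / 2) := by
    have hmin : 0 < min (α * δ / 2) (α / 2) := lt_min (by positivity) (by positivity)
    filter_upwards [Metric.tendsto_nhds.mp h2 _ hmin] with x hx
    rw [Real.dist_eq, sub_zero] at hx
    exact hx.le
  have ev2 : ∀ᶠ x : ℝ in atTop, |α - 1| * x ^ (ε - α) ≤ α * δ / 2 := by
    have t0 : Tendsto (fun x : ℝ => x ^ (ε - α)) atTop (nhds 0) := by
      simpa [neg_sub] using tendsto_rpow_neg_atTop (sub_pos.2 hεα)
    have t1 : Tendsto (fun x : ℝ => |α - 1| * x ^ (ε - α)) atTop (nhds 0) := by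
      simpa using t0.const_mul |α - 1|
    exact t1.eventually (eventually_le_nhds (by positivity))
  obtain ⟨T, hT⟩ := eventually_atTop.mp ((ev1.and ev2).and (eventually_ge_atTop (1:ℝ)))
  have hT1 : (1:ℝ) ≤ T := (hT T le_rfl).2
  have hT0 : (0:ℝ) < T := lt_of_lt_of_le one_pos hT1
  -- key pointwise bounds for x ≥ T
  have key_rho : ∀ x, T ≤ x →
      |h' x * x ^ (1 - α) + (α - 1) * x ^ (-α)| ≤ α * δ * x ^ (-ε) := by
    intro x hx
    obtain ⟨⟨hq, he⟩, hx1⟩ := hT x hx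
    have hx0 : (0:ℝ) < x := lt_of_lt_of_le one_pos hx1
    have h1 : h' x * x ^ (1 - α) = (h' x / x ^ (α - ε - 1)) * x ^ (-ε) := by
      rw [div_mul_eq_mul_div, div_eq_mul_inv, ← Real.rpow_neg hx0.le, mul_assoc,
        ← Real.rpow_add hx0, show -ε + -(α - ε - 1) = 1 - α by ring]
    have h2' : x ^ (-α) = x ^ (ε - α) * x ^ (-ε) := by
      rw [← Real.rpow_add hx0, show ε - α + -ε = -α by ring]
    have hrpos : (0:ℝ) ≤ x ^ (-ε) := Real.rpow_nonneg hx0.le _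
    have hepos : (0:ℝ) ≤ x ^ (ε - α) := Real.rpow_nonneg hx0.le _
    calc |h' x * x ^ (1 - α) + (α - 1) * x ^ (-α)|
        ≤ |h' x * x ^ (1 - α)| + |(α - 1) * x ^ (-α)| := abs_add_le _ _
      _ = |h' x / x ^ (α - ε - 1)| * x ^ (-ε)
            + (|α - 1| * x ^ (ε - α)) * x ^ (-ε) := by
          rw [h1, h2', abs_mul, abs_mul, abs_mul, abs_of_nonneg hrpos,
            abs_of_nonneg hepos]
          ring
      _ ≤ (α * δ / 2) * x ^ (-ε) + (α * δ / 2) * x ^ (-ε) := by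
          gcongr
          exact hq.trans (min_le_left _ _)
      _ = α * δ * x ^ (-ε) := by ring
  have key_h' : ∀ x, T ≤ x → |h' x| ≤ α / 2 * x ^ (α - 1) := by
    intro x hx
    obtain ⟨⟨hq, _⟩, hx1⟩ := hT x hx
    have hx0 : (0:ℝ) < x := lt_of_lt_of_le one_pos hx1
    have hp : (0:ℝ) < x ^ (α - ε - 1) := Real.rpow_pos_of_pos hx0 _
    have h1 : |h' x| = |h' x / x ^ (α - ε - 1)| * x ^ (α - ε - 1) := by
      rw [abs_div, abs_of_pos hp, div_mul_cancel₀ _ hp.ne']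
    rw [h1]
    calc |h' x / x ^ (α - ε - 1)| * x ^ (α - ε - 1)
        ≤ (α / 2) * x ^ (α - ε - 1) :=
          mul_le_mul_of_nonneg_right (hq.trans (min_le_right _ _)) hp.le
      _ ≤ α / 2 * x ^ (α - 1) :=
          mul_le_mul_of_nonneg_left
            (Real.rpow_le_rpow_of_exponent_le hx1 (by linarith)) (by positivity)
  -- lower bound on H
  have mono : ∀ x, T ≤ x → T ^ α / 2 + h T ≤ x ^ α / 2 + h x := by
    intro x hx
    have hder : ∀ y ∈ Set.Ici T, HasDerivAt (fun y : ℝ => y ^ α / 2 + h y)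
        (α * y ^ (α - 1) / 2 + h' y) y := by
      intro y hy
      have hy0 : y ≠ 0 := (lt_of_lt_of_le hT0 hy).ne'
      exact ((Real.hasDerivAt_rpow_const (Or.inl hy0)).div_const 2).add (hd y)
    have hmono : MonotoneOn (fun y : ℝ => y ^ α / 2 + h y) (Set.Ici T) := by
      apply monotoneOn_of_deriv_nonneg (convex_Ici T)
      · exact fun y hy => ((hder y hy).continuousAt).continuousWithinAt
      · intro y hy
        rw [interior_Ici] at hy
        exact ((hder y (Set.mem_Ici.mpr (le_of_lt (Set.mem_Ioi.mp hy)))).differentiableAt).differentiableWithinAt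
      · intro y hy
        rw [interior_Ici] at hy
        rw [(hder y (Set.mem_Ici.mpr (Set.mem_Ioi.mp hy).le)).deriv]
        have hb := (abs_le.mp (key_h' y (Set.mem_Ioi.mp hy).le)).1
        linarith
    exact hmono Set.self_mem_Ici hx hx
  have expbound : ∀ x, T ≤ x → Real.exp (-(x ^ α + h x)) ≤
      Real.exp (-(T ^ α / 2 + h T)) * Real.exp (-(x ^ α / 2)) := by
    intro x hx
    rw [← Real.exp_add, Real.exp_le_exp]
    have := mono x hx
    linarith
  -- measurability
  have hhcont : Continuous h := by
    rw [continuous_iff_continuousAt]; exact fun x => (hd x).continuousAt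
  have hucont : ∀ s : Set ℝ, (∀ x ∈ s, x ≠ 0) →
      ContinuousOn (fun x : ℝ => Real.exp (-(x ^ α + h x))) s := by
    intro s hs
    apply Real.continuous_exp.comp_continuousOn
    apply ContinuousOn.neg
    exact (ContinuousOn.rpow_const continuousOn_id
      (fun x hx => Or.inl (hs x hx))).add hhcont.continuousOn
  have hmeas_h' : Measurable h' := by
    have : h' = deriv h := funext fun x => ((hd x).deriv).symm
    rw [this]; exact measurable_deriv h
  -- eventual bound on a
  have ev4 : ∀ᶠ a : ℝ in atTop, δ * a ^ (-ε) ≤ 1/2 := by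
    have t1 : Tendsto (fun a : ℝ => δ * a ^ (-ε)) atTop (nhds 0) := by
      simpa using (tendsto_rpow_neg_atTop hε).const_mul δ
    exact t1.eventually (eventually_le_nhds (by norm_num))
  rw [eventually_atTop] at ev4
  obtain ⟨T2, hT2⟩ := ev4
  filter_upwards [eventually_ge_atTop T, eventually_ge_atTop T2] with a haT haT2
  have ha1 : (1:ℝ) ≤ a := le_trans hT1 haT
  have ha0 : (0:ℝ) < a := lt_of_lt_of_le one_pos ha1
  have hK : δ * a ^ (-ε) ≤ 1/2 := hT2 a haT2
  set u : ℝ → ℝ := fun x => Real.exp (-(x ^ α + h x)) with hu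
  set ρ : ℝ → ℝ := fun x => (h' x * x ^ (1 - α) + (α - 1) * x ^ (-α)) / α with hρ
  have hρ_le : ∀ x, a ≤ x → |ρ x| ≤ δ * a ^ (-ε) := by
    intro x hx
    have hx0 : (0:ℝ) < x := lt_of_lt_of_le ha0 hx
    have hb := key_rho x (le_trans haT hx)
    have hmono : x ^ (-ε) ≤ a ^ (-ε) :=
      Real.rpow_le_rpow_of_nonpos ha0 hx (neg_nonpos.2 hε.le)
    have : |ρ x| ≤ δ * x ^ (-ε) := by
      rw [hρ, abs_div, abs_of_pos hα, div_le_iff₀ hα]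
      calc |h' x * x ^ (1 - α) + (α - 1) * x ^ (-α)| ≤ α * δ * x ^ (-ε) := hb
        _ = δ * x ^ (-ε) * α := by ring
    exact this.trans (mul_le_mul_of_nonneg_left hmono hδpos.le)
  -- integrability of u on Ioi a
  have hu_int : IntegrableOn u (Set.Ioi a) := by
    apply Integrable.mono'
      ((aux_integrable α hα a ha0).const_mul (Real.exp (-(T ^ α / 2 + h T))))
    · exact (hucont (Set.Ioi a) (fun x hx => (lt_trans ha0 hx).ne')).aestronglyMeasurable
        measurableSet_Ioi
    · filter_upwards [ae_restrict_mem measurableSet_Ioi] with x hx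
      rw [Real.norm_eq_abs, abs_of_pos (Real.exp_pos _)]
      exact expbound x (le_trans haT hx.le)
  -- integrability of u * ρ
  have huρ_aesm : AEStronglyMeasurable (fun x => u x * ρ x)
      (volume.restrict (Set.Ioi a)) := by
    apply AEStronglyMeasurable.mul
    · exact (hucont (Set.Ioi a) (fun x hx => (lt_trans ha0 hx).ne')).aestronglyMeasurable
        measurableSet_Ioi
    · simp only [hρ, div_eq_mul_inv]
      apply AEStronglyMeasurable.mul _ aestronglyMeasurable_const
      apply AEStronglyMeasurable.add
      · have hm1 : AEStronglyMeasurable h' (volume.restrict (Set.Ioi a)) :=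
          hmeas_h'.aestronglyMeasurable
        exact hm1.mul
          ((ContinuousOn.rpow_const continuousOn_id
            (fun x hx => Or.inl (lt_trans ha0 hx).ne')).aestronglyMeasurable
            measurableSet_Ioi)
      · exact aestronglyMeasurable_const.mul
          ((ContinuousOn.rpow_const continuousOn_id
            (fun x hx => Or.inl (lt_trans ha0 hx).ne')).aestronglyMeasurable
            measurableSet_Ioi)
  have huρ_int : IntegrableOn (fun x => u x * ρ x) (Set.Ioi a) := by
    apply Integrable.mono' (hu_int.const_mul (δ * a ^ (-ε))) huρ_aesm
    filter_upwards [ae_restrict_mem measurableSet_Ioi] with x hx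
    rw [Real.norm_eq_abs, abs_mul, abs_of_pos (Real.exp_pos _)]
    calc u x * |ρ x| ≤ u x * (δ * a ^ (-ε)) :=
          mul_le_mul_of_nonneg_left (hρ_le x hx.le) (Real.exp_pos _).le
      _ = δ * a ^ (-ε) * u x := by ring
  -- derivative computation
  have hg_deriv : ∀ x, a ≤ x →
      HasDerivAt (fun y : ℝ => -(Real.exp (-(y ^ α + h y)) * y ^ (1 - α)) / α)
        (u x * (1 + ρ x)) x := by
    intro x hx
    have hx0 : (0:ℝ) < x := lt_of_lt_of_le ha0 hx
    have h1 : HasDerivAt (fun y : ℝ => y ^ α + h y) (α * x ^ (α - 1) + h' x) x :=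
      (Real.hasDerivAt_rpow_const (Or.inl hx0.ne')).add (hd x)
    have h2e : HasDerivAt (fun y : ℝ => Real.exp (-(y ^ α + h y)))
        (Real.exp (-(x ^ α + h x)) * (-(α * x ^ (α - 1) + h' x))) x := h1.neg.exp
    have h3 : HasDerivAt (fun y : ℝ => y ^ (1 - α)) ((1 - α) * x ^ (-α)) x := by
      have := Real.hasDerivAt_rpow_const (p := 1 - α) (Or.inl hx0.ne')
      rwa [show (1:ℝ) - α - 1 = -α by ring] at this
    have h4 := (h2e.mul h3).neg.div_const α
    refine h4.congr_deriv ?_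
    have hxx : x ^ (α - 1) * x ^ (1 - α) = 1 := by
      rw [← Real.rpow_add hx0, show α - 1 + (1 - α) = 0 by ring, Real.rpow_zero]
    have hAB : (α * x ^ (α - 1) + h' x) * x ^ (1 - α)
        = α + h' x * x ^ (1 - α) := by
      rw [add_mul, mul_assoc, hxx, mul_one]
    have hfin : -(u x * -(α * x ^ (α - 1) + h' x) * x ^ (1 - α)
          + u x * ((1 - α) * x ^ (-α))) / α = u x * (1 + ρ x) :=
      calc -(u x * -(α * x ^ (α - 1) + h' x) * x ^ (1 - α)
            + u x * ((1 - α) * x ^ (-α))) / α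
          = u x * ((α * x ^ (α - 1) + h' x) * x ^ (1 - α)
              - (1 - α) * x ^ (-α)) / α := by ring
        _ = u x * (α + (h' x * x ^ (1 - α) + (α - 1) * x ^ (-α))) / α := by
            rw [hAB]; ring
        _ = u x * (1 + ρ x) := by rw [hρ]; field_simp
    rw [hu] at hfin
    exact hfin
  -- limit of g at infinity
  have hgtend : Tendsto (fun x : ℝ => -(Real.exp (-(x ^ α + h x)) * x ^ (1 - α)) / α)
      atTop (nhds 0) := by
    have haux := aux_tendsto α (1 - α) hα
    have hbound0 : Tendsto
        (fun x : ℝ => Real.exp (-(T ^ α / 2 + h T)) * (x ^ (1 - α) * Real.exp (-(x ^ α / 2))) / α)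
        atTop (nhds 0) := by
      have := (haux.const_mul (Real.exp (-(T ^ α / 2 + h T)))).div_const α
      simpa using this
    have hpos : Tendsto (fun x : ℝ => Real.exp (-(x ^ α + h x)) * x ^ (1 - α) / α)
        atTop (nhds 0) := by
      apply squeeze_zero' _ _ hbound0
      · filter_upwards [eventually_ge_atTop (1:ℝ)] with x hx
        have hx0 : (0:ℝ) < x := lt_of_lt_of_le one_pos hx
        positivity
      · filter_upwards [eventually_ge_atTop T] with x hx
        have hx0 : (0:ℝ) < x := lt_of_lt_of_le hT0 hx
        have hb := expbound x hx
        have hr : (0:ℝ) ≤ x ^ (1 - α) := Real.rpow_nonneg hx0.le _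
        apply div_le_div_of_nonneg_right ?_ hα.le
        calc Real.exp (-(x ^ α + h x)) * x ^ (1 - α)
            ≤ (Real.exp (-(T ^ α / 2 + h T)) * Real.exp (-(x ^ α / 2))) * x ^ (1 - α) :=
              mul_le_mul_of_nonneg_right hb hr
          _ = Real.exp (-(T ^ α / 2 + h T)) * (x ^ (1 - α) * Real.exp (-(x ^ α / 2))) := by
              ring
    have := hpos.neg
    simp only [neg_zero] at this
    refine this.congr (fun x => by ring)
  -- FTC
  have hint_sum : IntegrableOn (fun x => u x * (1 + ρ x)) (Set.Ioi a) := by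
    have heq : (fun x => u x * (1 + ρ x)) = fun x => u x + u x * ρ x := by
      funext x; ring
    rw [heq]
    exact hu_int.add huρ_int
  have hftc : ∫ x in Set.Ioi a, u x * (1 + ρ x)
      = 0 - (-(Real.exp (-(a ^ α + h a)) * a ^ (1 - α)) / α) := by
    apply integral_Ioi_of_hasDerivAt_of_tendsto
      ((hg_deriv a le_rfl).continuousAt.continuousWithinAt)
      (fun x hx => hg_deriv x (le_of_lt hx)) hint_sum hgtend
  have hsplit : ∫ x in Set.Ioi a, u x * (1 + ρ x)
      = (∫ x in Set.Ioi a, u x) + ∫ x in Set.Ioi a, u x * ρ x := by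
    simp_rw [mul_add, mul_one]
    exact integral_add hu_int huρ_int
  set I : ℝ := ∫ x in Set.Ioi a, u x with hI
  set R : ℝ := ∫ x in Set.Ioi a, u x * ρ x with hR
  have hEA : I + R = Real.exp (-(a ^ α + h a)) * a ^ (1 - α) / α := by
    rw [hI, hR, ← hsplit, hftc]; ring
  have hInn : 0 ≤ I := integral_nonneg (fun x => (Real.exp_pos _).le)
  have hRbound : |R| ≤ δ * a ^ (-ε) * I := by
    rw [hR, hI]
    calc |∫ x in Set.Ioi a, u x * ρ x| ≤ ∫ x in Set.Ioi a, |u x * ρ x| := by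
          have := norm_integral_le_integral_norm (μ := volume.restrict (Set.Ioi a))
            (fun x => u x * ρ x)
          simpa only [Real.norm_eq_abs] using this
      _ ≤ ∫ x in Set.Ioi a, δ * a ^ (-ε) * u x := by
          apply integral_mono_ae huρ_int.abs (hu_int.const_mul _)
          filter_upwards [ae_restrict_mem measurableSet_Ioi] with x hx
          rw [abs_mul, abs_of_pos (Real.exp_pos _)]
          calc u x * |ρ x| ≤ u x * (δ * a ^ (-ε)) :=
                mul_le_mul_of_nonneg_left (hρ_le x hx.le) (Real.exp_pos _).le
            _ = δ * a ^ (-ε) * u x := by ring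
      _ = δ * a ^ (-ε) * I := by rw [hI, integral_const_mul]
  -- final algebra
  have hE : (0:ℝ) < Real.exp (-(a ^ α + h a)) := Real.exp_pos _
  have hA : (0:ℝ) < a ^ (1 - α) / α := by positivity
  have hEA' : I = Real.exp (-(a ^ α + h a)) * (a ^ (1 - α) / α) - R := by
    rw [mul_div_assoc] at hEA; linarith
  set W : ℝ := Real.exp (-(a ^ α + h a)) * (a ^ (1 - α) / α) with hW
  have hWpos : 0 < W := mul_pos hE hA
  have hIle : I ≤ 2 * W := by
    have h1 : R ≥ -|R| := neg_abs_le R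
    have h2 : δ * a ^ (-ε) * I ≤ (1/2) * I :=
      mul_le_mul_of_nonneg_right hK hInn
    linarith [hRbound]
  have hRfin : |R| ≤ c * a ^ (-ε) * W := by
    have haε : (0:ℝ) < a ^ (-ε) := Real.rpow_pos_of_pos ha0 _
    calc |R| ≤ δ * a ^ (-ε) * I := hRbound
      _ ≤ δ * a ^ (-ε) * (2 * W) := by
          apply mul_le_mul_of_nonneg_left hIle (by positivity)
      _ = 2 * δ * (a ^ (-ε) * W) := by ring
      _ ≤ c * (a ^ (-ε) * W) := by
          apply mul_le_mul_of_nonneg_right hδc (by positivity)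
      _ = c * a ^ (-ε) * W := by ring
  have hkey : I / Real.exp (-(a ^ α + h a)) / (a ^ (1 - α) / α) - 1 = -R / W := by
    rw [hEA', hW]
    field_simp
    ring
  rw [Real.norm_eq_abs, Real.norm_eq_abs, hkey, abs_div, abs_neg, abs_of_pos hWpos,
    div_le_iff₀ hWpos, abs_of_pos (Real.rpow_pos_of_pos ha0 (-ε))]
  linarith [hRfin]
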